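/- arXiv:2309.13738 — 4 statements merged into one kernel-verified Lean document; each statement's English description precedes it below -/
import Mathlib

section
/- Let g be an inner product on a finite-dimensional vector space and B a g-self-adjoint endomorphism such that Id + B is invertible. Define ĝ(X,Y) = g((Id+B)X, (Id+B)Y) and B̂ = (Id+B)⁻¹(Id−B). Then g(X,Y) = (1/4) ĝ((Id+B̂)X, (Id+B̂)Y), B = (Id+B̂)⁻¹(Id−B̂), and (Id+B̂)(Id+B) = 2·Id. -/
open scoped RealInnerProductSpace

/-- The algebraic duality between `(g,B)` and the data at infinity `(ĝ,B̂)`: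
with `ĝ(X,Y) = g((Id+B)X,(Id+B)Y)` and `B̂ = (Id+B)⁻¹(Id−B)`, one has
`g(X,Y) = (1/4)ĝ((Id+B̂)X,(Id+B̂)Y)`, `B = (Id+B̂)⁻¹(Id−B̂)`, and
`(Id+B̂)(Id+B) = 2·Id`. -/
theorem duality_at_infinity {V : Type*} [NormedAddCommGroup V] [InnerProductSpace ℝ V]
    [FiniteDimensional ℝ V]
    (B : Module.End ℝ V) (hB : ∀ X Y : V, ⟪B X, Y⟫ = ⟪X, B Y⟫)
    (hinv : IsUnit (1 + B)) :
    (∀ X Y : V, ⟪X, Y⟫ = (1/4) *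
        ⟪(1 + B) ((1 + Ring.inverse (1 + B) * (1 - B)) X),
          (1 + B) ((1 + Ring.inverse (1 + B) * (1 - B)) Y)⟫)
    ∧ B = Ring.inverse (1 + Ring.inverse (1 + B) * (1 - B))
        * (1 - Ring.inverse (1 + B) * (1 - B))
    ∧ (1 + Ring.inverse (1 + B) * (1 - B)) * (1 + B) = 2 := by
  set I : Module.End ℝ V := 1 + B with hI
  set J : Module.End ℝ V := 1 + Ring.inverse I * (1 - B) with hJdef
  have h1 : Ring.inverse I * I = 1 := Ring.inverse_mul_cancel _ hinv
  have h2 : I * Ring.inverse I = 1 := Ring.mul_inverse_cancel _ hinv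
  have hsum : I + (1 - B) = 2 := by rw [hI]; noncomm_ring; simp
  have hsub : I - (1 - B) = 2 * B := by rw [hI]; noncomm_ring
  have hJ : J = Ring.inverse I * 2 := by
    rw [hJdef, ← hsum, mul_add, h1]
  have h2I : (2 : Module.End ℝ V) * I = I * 2 := by rw [two_mul, mul_two]
  have hJI : J * I = 2 := by
    rw [hJ, mul_assoc, h2I, ← mul_assoc, h1, one_mul]
  have hIJ : I * J = 2 := by
    rw [hJ, ← mul_assoc, h2, one_mul]
  have hdiff : (1 : Module.End ℝ V) - Ring.inverse I * (1 - B)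
      = Ring.inverse I * (2 * B) := by
    rw [← hsub]
    conv_rhs => rw [mul_sub, h1]
  set c : Module.End ℝ V := (1/2 : ℝ) • I with hc
  have h2s : (2 : Module.End ℝ V) = (2 : ℝ) • 1 :=
    ((two_smul ℝ (1 : Module.End ℝ V)).trans one_add_one_eq_two).symm
  have half2 : (1/2 : ℝ) • (2 : Module.End ℝ V) = 1 := by
    rw [h2s, smul_smul]; norm_num
  have hJc : J * c = 1 := by rw [hc, mul_smul_comm, hJI]; exact half2
  have hcJ : c * J = 1 := by rw [hc, smul_mul_assoc, hIJ]; exact half2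
  refine ⟨?_, ?_, hJI⟩
  · intro X Y
    have happ : ∀ Z : V, I (J Z) = Z + Z := by
      intro Z
      have h' : I (J Z) = (I * J) Z := rfl
      have h11 : (2 : Module.End ℝ V) = 1 + 1 := by norm_num
      rw [h', hIJ, h11]
      simp
    rw [happ X, happ Y]
    simp only [inner_add_left, inner_add_right]
    ring
  · have huJ : Ring.inverse J = c := by
      have h' : J = ((⟨J, c, hJc, hcJ⟩ : (Module.End ℝ V)ˣ) : Module.End ℝ V) := rfl
      rw [h', Ring.inverse_unit]
      rfl
    rw [huJ, hdiff, hc, smul_mul_assoc, ← mul_assoc, h2, one_mul, two_mul, smul_add,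
      ← add_smul]
    norm_num
end

section
/- Let g be an inner product on a finite-dimensional vector space and B a g-self-adjoint endomorphism with Id+B invertible. Then B̂ = (Id+B)⁻¹(Id−B) is self-adjoint with respect to ĝ(X,Y) = g((Id+B)X,(Id+B)Y). -/
open scoped RealInnerProductSpace

/-- `B̂ = (Id+B)⁻¹(Id−B)` is self-adjoint with respect to
`ĝ(X,Y) = g((Id+B)X,(Id+B)Y)`. -/
theorem hatB_self_adjoint {V : Type*} [NormedAddCommGroup V] [InnerProductSpace ℝ V]
    [FiniteDimensional ℝ V]
    (B : Module.End ℝ V) (hB : ∀ X Y : V, ⟪B X, Y⟫ = ⟪X, B Y⟫)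
    (hinv : IsUnit (1 + B)) :
    ∀ X Y : V,
      ⟪(1 + B) ((Ring.inverse (1 + B) * (1 - B)) X), (1 + B) Y⟫
        = ⟪(1 + B) X, (1 + B) ((Ring.inverse (1 + B) * (1 - B)) Y)⟫ := by
  intro X Y
  have h1 : (1 + B) * (Ring.inverse (1 + B) * (1 - B)) = 1 - B := by
    rw [← mul_assoc, Ring.mul_inverse_cancel _ hinv, one_mul]
  have h2 : ∀ Z : V, (1 + B) ((Ring.inverse (1 + B) * (1 - B)) Z) = (1 - B) Z := by
    intro Z
    have := congrArg (fun f : Module.End ℝ V => f Z) h1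
    simpa [Module.End.mul_apply] using this
  rw [h2, h2]
  simp only [LinearMap.sub_apply, LinearMap.add_apply, Module.End.one_apply,
    inner_sub_left, inner_add_left, inner_sub_right, inner_add_right, hB]
  ring
end

section
/- Let g be an inner product on an n-dimensional vector space, B a g-self-adjoint endomorphism with Id+B invertible, ĝ(X,Y)=g((Id+B)X,(Id+B)Y), Î(X,Y)=ĝ(B̂X,Y) with B̂=(Id+B)⁻¹(Id−B), and II(X,Y)=g(BX,Y), III(X,Y)=g(BX,BY), Î Î Î(X,Y)=ĝ(B̂X,B̂Y). Then ĝ = g + 2II + III, Î = g − III, and Î Î Î = g − 2II + III. -/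
open scoped RealInnerProductSpace

/-- The fundamental forms at infinity in terms of those of the hypersurface:
`ĝ = g + 2II + III`, `Î = g − III`, `ÎÎÎ = g − 2II + III`. -/
theorem forms_at_infinity {V : Type*} [NormedAddCommGroup V] [InnerProductSpace ℝ V]
    [FiniteDimensional ℝ V]
    (B : Module.End ℝ V) (hB : ∀ X Y : V, ⟪B X, Y⟫ = ⟪X, B Y⟫)
    (hinv : IsUnit (1 + B)) :
    ∀ X Y : V,
      (⟪(1 + B) X, (1 + B) Y⟫ = ⟪X, Y⟫ + 2 * ⟪B X, Y⟫ + ⟪B X, B Y⟫)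
      ∧ (⟪(1 + B) ((Ring.inverse (1 + B) * (1 - B)) X), (1 + B) Y⟫
          = ⟪X, Y⟫ - ⟪B X, B Y⟫)
      ∧ (⟪(1 + B) ((Ring.inverse (1 + B) * (1 - B)) X),
            (1 + B) ((Ring.inverse (1 + B) * (1 - B)) Y)⟫
          = ⟪X, Y⟫ - 2 * ⟪B X, Y⟫ + ⟪B X, B Y⟫) := by
  intro X Y
  have key : ∀ Z : V, (1 + B) ((Ring.inverse (1 + B) * (1 - B)) Z) = (1 - B) Z := by
    intro Z
    have : (1 + B) * (Ring.inverse (1 + B) * (1 - B)) = (1 - B) := by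
      rw [← mul_assoc, Ring.mul_inverse_cancel _ hinv, one_mul]
    calc (1 + B) ((Ring.inverse (1 + B) * (1 - B)) Z)
        = ((1 + B) * (Ring.inverse (1 + B) * (1 - B))) Z := rfl
      _ = (1 - B) Z := by rw [this]
  have hXY := hB X Y
  simp only [key, LinearMap.add_apply, LinearMap.sub_apply, Module.End.one_apply,
    inner_add_add_self, inner_sub_sub_self, inner_add_left, inner_add_right,
    inner_sub_left, inner_sub_right, real_inner_comm (B X) Y]
  refine ⟨by rw [← hXY]; ring, by rw [← hXY]; ring, by rw [← hXY]; ring⟩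
end

section
/- If all eigenvalues of the g-self-adjoint endomorphism B lie in the closed interval [−1,1], then for every t ∈ ℝ the endomorphism cosh(t)·Id + sinh(t)·B is invertible, so the parallel flow g_t(X,Y)=g((cosh(t)Id+sinh(t)B)X,(cosh(t)Id+sinh(t)B)Y) is a positive definite form for all t. -/
open scoped RealInnerProductSpace

/-- If all eigenvalues of the `g`-self-adjoint endomorphism `B` lie in `[−1,1]`,
then for all `t` the endomorphism `cosh(t)Id + sinh(t)B` is invertible and the
parallel form `g_t` is positive definite. -/
theorem parallel_flow_all_time {V : Type*} [NormedAddCommGroup V] [InnerProductSpace ℝ V]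
    [FiniteDimensional ℝ V]
    (B : Module.End ℝ V) (hB : ∀ X Y : V, ⟪B X, Y⟫ = ⟪X, B Y⟫)
    (heig : ∀ μ : ℝ, Module.End.HasEigenvalue B μ → μ ∈ Set.Icc (-1 : ℝ) 1) :
    ∀ t : ℝ,
      IsUnit (Real.cosh t • (1 : Module.End ℝ V) + Real.sinh t • B)
      ∧ ∀ X : V, X ≠ 0 →
          0 < ⟪(Real.cosh t • (1 : Module.End ℝ V) + Real.sinh t • B) X,
                (Real.cosh t • (1 : Module.End ℝ V) + Real.sinh t • B) X⟫ := by
  intro t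
  set f := Real.cosh t • (1 : Module.End ℝ V) + Real.sinh t • B with hf
  have hker : ∀ X : V, f X = 0 → X = 0 := by
    intro X hX
    by_contra hX0
    have hfx : Real.cosh t • X + Real.sinh t • B X = 0 := by
      simpa [hf, Module.End.one_apply] using hX
    by_cases hs : Real.sinh t = 0
    · have h0 : Real.cosh t • X = 0 := by simpa [hs] using hfx
      have hc : Real.cosh t ≠ 0 := ne_of_gt (Real.cosh_pos t)
      exact hX0 (by simpa [hc] using smul_eq_zero.mp h0)
    · have hBX : B X = (-(Real.cosh t / Real.sinh t)) • X := by
        have h1 : Real.sinh t • B X = (-(Real.cosh t)) • X := by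
          have := hfx
          rw [add_eq_zero_iff_eq_neg] at this
          -- cosh • X = - (sinh • B X)  — other direction
          have h2 : Real.sinh t • B X = -(Real.cosh t • X) := by
            have := hfx
            linear_combination (norm := module) this
          simpa [neg_smul] using h2
        have := congrArg (fun v => (Real.sinh t)⁻¹ • v) h1
        simpa [smul_smul, inv_mul_cancel₀ hs, neg_div, div_eq_inv_mul, mul_comm] using this
      have heigv : Module.End.HasEigenvalue B (-(Real.cosh t / Real.sinh t)) :=
        Module.End.hasEigenvalue_of_hasEigenvector
          ⟨Module.End.mem_eigenspace_iff.mpr hBX, hX0⟩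
      have hμ := heig _ heigv
      have habs : |Real.sinh t| < Real.cosh t := by
        nlinarith [Real.cosh_sq_sub_sinh_sq t, abs_nonneg (Real.sinh t),
          sq_abs (Real.sinh t), Real.cosh_pos t]
      have h1lt : 1 < |(-(Real.cosh t / Real.sinh t))| := by
        rw [abs_neg, abs_div, abs_of_pos (Real.cosh_pos t)]
        rw [one_lt_div (abs_pos.mpr hs)]
        exact habs
      have : |(-(Real.cosh t / Real.sinh t))| ≤ 1 := abs_le.mpr ⟨hμ.1, hμ.2⟩
      linarith
  have hinj : Function.Injective f := by
    rw [← LinearMap.ker_eq_bot]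
    exact LinearMap.ker_eq_bot'.mpr hker
  constructor
  · exact (LinearMap.isUnit_iff_ker_eq_bot f).mpr (LinearMap.ker_eq_bot.mpr hinj)
  · intro X hX
    have : f X ≠ 0 := fun h => hX (hker X h)
    have h0 : ⟪f X, f X⟫ ≠ 0 := fun h => this (inner_self_eq_zero.mp h)
    exact lt_of_le_of_ne real_inner_self_nonneg (Ne.symm h0)
end
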